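/- arXiv:2310.12291 — 3 statements merged into one kernel-verified Lean document; each statement's English description precedes it below -/
import Mathlib

section
/- A loopless and coloopless matroid M on a finite ground set E is uniform if and only if every circuit of M intersects every cocircuit of M (i.e., for every circuit C and cocircuit C*, C ∩ C* ≠ ∅). -/
open Matroid

variable {α : Type*}

/-- A matroid is loopless if every singleton of the ground set is independent. -/
def MatroidLoopless (M : Matroid α) : Prop := ∀ a ∈ M.E, M.Indep {a}

/-- A matroid is coloopless if its dual is loopless. -/
def MatroidColoopless (M : Matroid α) : Prop := ∀ a ∈ M.E, M✶.Indep {a}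

/-- `F|G` is a biflat of `M`: `F` is a nonempty flat of `M`, `G` a nonempty flat of `M✶`,
at least one of them is proper, and `F ∪ G = E`. -/
def IsBiflat (M : Matroid α) (F G : Set α) : Prop :=
  M.IsFlat F ∧ M✶.IsFlat G ∧ F.Nonempty ∧ G.Nonempty ∧ (F ≠ M.E ∨ G ≠ M.E) ∧ F ∪ G = M.E

/-- The order on biflats: inclusion in the first component, reverse inclusion in the second. -/
def BiflatLE (p q : Set α × Set α) : Prop := p.1 ⊆ q.1 ∧ q.2 ⊆ p.2

/-- The rank of a matroid: the (common) cardinality of its bases. -/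
noncomputable def matroidRank (M : Matroid α) : ℕ :=
  sSup (Set.ncard '' {B | M.IsBase B})

/-- A circuit: a minimal dependent set. -/
def IsCircuitOf (M : Matroid α) (C : Set α) : Prop :=
  C ⊆ M.E ∧ ¬ M.Indep C ∧ ∀ D ⊂ C, M.Indep D

/-- A matroid is uniform if the independent subsets of the ground set are exactly those of
size at most the rank. -/
def MatroidIsUniform (M : Matroid α) : Prop :=
  ∀ I ⊆ M.E, (M.Indep I ↔ I.ncard ≤ matroidRank M)

/-- Every base has cardinality `matroidRank M`. -/
lemma base_ncard_aux (M : Matroid α) {B : Set α} (hB : M.IsBase B) :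
    B.ncard = matroidRank M := by
  have himg : Set.ncard '' {B | M.IsBase B} = {B.ncard} := by
    ext n
    simp only [Set.mem_image, Set.mem_setOf_eq, Set.mem_singleton_iff]
    constructor
    · rintro ⟨B', hB', rfl⟩
      exact hB'.ncard_eq_ncard_of_isBase hB
    · rintro rfl; exact ⟨B, hB, rfl⟩
  rw [matroidRank, himg, csSup_singleton]

/-- Independent sets have size at most the rank. -/
lemma indep_ncard_le_aux (M : Matroid α) [M.Finite] {I : Set α} (hI : M.Indep I) :
    I.ncard ≤ matroidRank M := by
  obtain ⟨B, hB, hIB⟩ := hI.exists_isBase_superset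
  rw [← base_ncard_aux M hB]
  exact Set.ncard_le_ncard hIB (M.set_finite B hB.subset_ground)

/-- The rank is at most the size of the ground set. -/
lemma rank_le_ground_aux (M : Matroid α) [M.Finite] :
    matroidRank M ≤ M.E.ncard := by
  obtain ⟨B, hB⟩ := M.exists_isBase
  rw [← base_ncard_aux M hB]
  exact Set.ncard_le_ncard hB.subset_ground M.ground_finite

/-- The dual rank. -/
lemma dual_rank_aux (M : Matroid α) [M.Finite] :
    matroidRank M✶ = M.E.ncard - matroidRank M := by
  obtain ⟨B, hB⟩ := M.exists_isBase
  have hBE : B ⊆ M.E := hB.subset_ground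
  have hdb : M✶.IsBase (M.E \ B) := by
    rw [Matroid.dual_isBase_iff (by simpa using Set.diff_subset)]
    rwa [Set.diff_diff_cancel_left hBE]
  rw [← base_ncard_aux M✶ hdb, ← base_ncard_aux M hB,
    Set.ncard_diff hBE (M.set_finite B hBE)]

/-- Every finite dependent set contains a circuit. -/
lemma exists_circuit_subset_aux (M : Matroid α) :
    ∀ n (S : Set α), S.ncard = n → S.Finite → S ⊆ M.E → ¬ M.Indep S →
      ∃ C ⊆ S, IsCircuitOf M C := by
  intro n
  induction n using Nat.strong_induction_on with
  | _ n ih =>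
    intro S hcard hfin hSE hdep
    by_cases h : ∀ D ⊂ S, M.Indep D
    · exact ⟨S, subset_rfl, hSE, hdep, h⟩
    · push_neg at h
      obtain ⟨D, hDS, hDdep⟩ := h
      have hlt : D.ncard < n := hcard ▸ Set.ncard_lt_ncard hDS hfin
      obtain ⟨C, hCD, hC⟩ := ih D.ncard hlt D rfl (hfin.subset hDS.subset)
        (hDS.subset.trans hSE) hDdep
      exact ⟨C, hCD.trans hDS.subset, hC⟩

/-- In a uniform matroid, every circuit has size exactly `rank + 1`. -/
lemma circuit_ncard_aux (M : Matroid α) [M.Finite] (hU : MatroidIsUniform M)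
    {C : Set α} (hC : IsCircuitOf M C) : C.ncard = matroidRank M + 1 := by
  obtain ⟨hCE, hCdep, hCmin⟩ := hC
  have hCfin : C.Finite := M.set_finite C hCE
  have h1 : matroidRank M < C.ncard := by
    by_contra h
    exact hCdep ((hU C hCE).mpr (not_lt.mp h))
  have hne : C.Nonempty := by
    rcases C.eq_empty_or_nonempty with rfl | h
    · exact absurd M.empty_indep hCdep
    · exact h
  obtain ⟨e, he⟩ := hne
  have hss : C \ {e} ⊂ C := Set.sdiff_singleton_ssubset.mpr he
  have hDind : M.Indep (C \ {e}) := hCmin _ hss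
  have h2 : (C \ {e}).ncard ≤ matroidRank M :=
    (hU _ (hss.subset.trans hCE)).mp hDind
  rw [Set.ncard_diff_singleton_of_mem he] at h2
  omega

/-- The dual of a uniform matroid is uniform. -/
lemma dual_uniform_aux (M : Matroid α) [M.Finite] (hU : MatroidIsUniform M) :
    MatroidIsUniform M✶ := by
  intro I hI
  rw [Matroid.dual_ground] at hI
  constructor
  · exact fun h => indep_ncard_le_aux M✶ h
  · intro h
    rw [dual_rank_aux M] at h
    have hrle : matroidRank M ≤ M.E.ncard := rank_le_ground_aux M
    have hfinE : M.E.Finite := M.ground_finite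
    have hIfin : I.Finite := hfinE.subset hI
    have hcardEI : (M.E \ I).ncard = M.E.ncard - I.ncard :=
      Set.ncard_diff hI hIfin
    have hge : matroidRank M ≤ (M.E \ I).ncard := by
      have hIle : I.ncard ≤ M.E.ncard := Set.ncard_le_ncard hI hfinE
      omega
    obtain ⟨B', hB'sub, hB'card⟩ := Set.exists_subset_card_eq hge
    have hB'E : B' ⊆ M.E := hB'sub.trans Set.diff_subset
    have hB'ind : M.Indep B' := (hU B' hB'E).mpr (le_of_eq hB'card)
    obtain ⟨B, hB, hBsub⟩ := hB'ind.exists_isBase_superset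
    have hBeq : B' = B := Set.eq_of_subset_of_ncard_le hBsub
      (by rw [base_ncard_aux M hB, hB'card]) (M.set_finite B hB.subset_ground)
    refine Matroid.dual_indep_iff_exists'.mpr ⟨hI, B, hB, ?_⟩
    rw [← hBeq]
    exact ((Set.subset_diff.mp hB'sub).2).symm

/-- a loopless and coloopless matroid on a finite ground set is uniform iff
every circuit intersects every cocircuit. -/
theorem uniform_iff_circuit_meets_cocircuit (M : Matroid α) [M.Finite]
    (hl : MatroidLoopless M) (hcl : MatroidColoopless M) :
    MatroidIsUniform M ↔
      ∀ C C' : Set α, IsCircuitOf M C → IsCircuitOf M✶ C' → (C ∩ C').Nonempty := by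
  have hfinE : M.E.Finite := M.ground_finite
  constructor
  · intro hU C C' hC hC'
    have h1 : C.ncard = matroidRank M + 1 := circuit_ncard_aux M hU hC
    have h2 : C'.ncard = matroidRank M✶ + 1 :=
      circuit_ncard_aux M✶ (dual_uniform_aux M hU) hC'
    rw [dual_rank_aux M] at h2
    have hrle : matroidRank M ≤ M.E.ncard := rank_le_ground_aux M
    by_contra hcon
    rw [Set.not_nonempty_iff_eq_empty] at hcon
    have hdisj : Disjoint C C' := Set.disjoint_iff_inter_eq_empty.mpr hcon
    have hCE : C ⊆ M.E := hC.1
    have hC'E : C' ⊆ M.E := hC'.1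
    have hsum : (C ∪ C').ncard = C.ncard + C'.ncard :=
      Set.ncard_union_eq hdisj (hfinE.subset hCE) (hfinE.subset hC'E)
    have hle : (C ∪ C').ncard ≤ M.E.ncard :=
      Set.ncard_le_ncard (Set.union_subset hCE hC'E) hfinE
    omega
  · intro h
    by_contra hnu
    rw [MatroidIsUniform] at hnu
    push_neg at hnu
    obtain ⟨I, hIE, hIiff⟩ := hnu
    have hIdep : ¬ M.Indep I ∧ I.ncard ≤ matroidRank M := by
      rcases hIiff with ⟨hind, hgt⟩ | h
      · exact absurd (indep_ncard_le_aux M hind) (not_le.mpr hgt)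
      · exact h
    obtain ⟨C, hCI, hC⟩ := exists_circuit_subset_aux M I.ncard I rfl
      (hfinE.subset hIE) hIE hIdep.1
    have hCE : C ⊆ M.E := hC.1
    have hCfin : C.Finite := hfinE.subset hCE
    have hCcard : C.ncard ≤ matroidRank M :=
      le_trans (Set.ncard_le_ncard hCI (hfinE.subset hIE)) hIdep.2
    -- E \ C is dependent in the dual
    have hdep' : ¬ M✶.Indep (M.E \ C) := by
      intro hind
      obtain ⟨-, B, hB, hdisj⟩ := Matroid.dual_indep_iff_exists'.mp hind
      have hBC : B ⊆ C := by
        intro x hx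
        by_contra hxC
        exact hdisj.ne_of_mem ⟨hB.subset_ground hx, hxC⟩ hx rfl
      have hBeq : B = C := Set.eq_of_subset_of_ncard_le hBC
        (le_trans hCcard (le_of_eq (base_ncard_aux M hB).symm)) hCfin
      exact hC.2.1 (hBeq ▸ hB.indep)
    obtain ⟨C', hC'sub, hC'⟩ := exists_circuit_subset_aux M✶ (M.E \ C).ncard
      (M.E \ C) rfl (hfinE.subset Set.diff_subset)
      (by rw [Matroid.dual_ground]; exact Set.diff_subset) hdep'
    obtain ⟨x, hx⟩ := h C C' hC hC'
    exact (hC'sub hx.2).2 hx.1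
end

section
/- A loopless and coloopless matroid M on ground set E has no mixed biflats if and only if M is a uniform matroid. -/
open Matroid

variable {α : Type*}

/-- The closure of any set is a flat. -/
lemma aux_closure_flat (M : Matroid α) (X : Set α) : M.IsFlat (M.closure X) := by
  rw [Matroid.closure_def, Set.sInter_eq_iInter]
  have : Nonempty ({F | M.IsFlat F ∧ X ∩ M.E ⊆ F} : Set (Set α)) :=
    ⟨⟨M.E, M.ground_isFlat, Set.inter_subset_right⟩⟩
  exact Matroid.IsFlat.iInter fun F ↦ F.2.1

/-- `matroidRank` equals the cardinality of any base. -/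
lemma aux_rank_eq {M : Matroid α} {B : Set α} (hB : M.IsBase B) :
    matroidRank M = B.ncard := by
  have himg : Set.ncard '' {B' | M.IsBase B'} = {B.ncard} := by
    ext n
    simp only [Set.mem_image, Set.mem_setOf_eq, Set.mem_singleton_iff]
    constructor
    · rintro ⟨B', hB', rfl⟩; exact hB'.ncard_eq_ncard_of_isBase hB
    · rintro rfl; exact ⟨B, hB, rfl⟩
  rw [matroidRank, himg, csSup_singleton]

/-- An independent set of full rank is a base. -/
lemma aux_base_of_indep_card {M : Matroid α} [M.Finite] {S : Set α}
    (hS : M.Indep S) (hc : matroidRank M ≤ S.ncard) : M.IsBase S := by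
  obtain ⟨B, hB, hSB⟩ := hS.exists_isBase_superset
  have hBfin : B.Finite := M.set_finite B hB.subset_ground
  have hSB' : S = B := Set.eq_of_subset_of_ncard_le hSB (by rwa [← aux_rank_eq hB]) hBfin
  rwa [hSB']

/-- An independent set has cardinality at most the rank. -/
lemma aux_indep_card_le {M : Matroid α} [M.Finite] {S : Set α}
    (hS : M.Indep S) : S.ncard ≤ matroidRank M := by
  obtain ⟨B, hB, hSB⟩ := hS.exists_isBase_superset
  rw [aux_rank_eq hB]
  exact Set.ncard_le_ncard hSB (M.set_finite B hB.subset_ground)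

/-- Every dependent set in a finite matroid contains a circuit. -/
lemma aux_exists_circuit {M : Matroid α} {I : Set α} (hfin : I.Finite)
    (hdep : ¬ M.Indep I) (hIE : I ⊆ M.E) :
    ∃ C ⊆ I, ¬ M.Indep C ∧ ∀ D ⊂ C, M.Indep D := by
  set T : Set (Set α) := {C | C ⊆ I ∧ ¬ M.Indep C} with hT
  have hTfin : T.Finite := (hfin.finite_subsets).subset fun C hC ↦ hC.1
  have hTne : T.Nonempty := ⟨I, Set.Subset.rfl, hdep⟩
  obtain ⟨C, hC, hmin⟩ := Set.Finite.exists_minimalFor id T hTfin hTne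
  refine ⟨C, hC.1, hC.2, fun D hD ↦ ?_⟩
  by_contra hDind
  have hDT : D ∈ T := ⟨hD.subset.trans hC.1, hDind⟩
  have := hmin (j := D) hDT hD.subset
  exact hD.ne (Set.Subset.antisymm hD.subset this)

/-- a loopless and coloopless matroid has no mixed biflats (biflats `F|G` with
both `F` and `G` proper) iff it is uniform. -/
theorem no_mixed_biflats_iff_uniform (M : Matroid α) [M.Finite]
    (hl : MatroidLoopless M) (hcl : MatroidColoopless M) :
    (∀ F G : Set α, IsBiflat M F G → ¬ (F ≠ M.E ∧ G ≠ M.E)) ↔ MatroidIsUniform M := by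
  have hEfin : M.E.Finite := M.ground_finite
  set r := matroidRank M with hr
  set n := M.E.ncard with hn
  constructor
  · -- no mixed biflats ⇒ uniform
    intro h I hIE
    refine ⟨fun hI ↦ aux_indep_card_le hI, fun hcard ↦ ?_⟩
    by_contra hI
    obtain ⟨C, hCI, hCdep, hCmin⟩ := aux_exists_circuit (hEfin.subset hIE) hI hIE
    have hCE : C ⊆ M.E := hCI.trans hIE
    have hCfin : C.Finite := hEfin.subset hCE
    have hCcard : C.ncard ≤ r := le_trans (Set.ncard_le_ncard hCI (hEfin.subset hIE)) hcard
    have hCne : C.Nonempty := by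
      rcases C.eq_empty_or_nonempty with rfl | hne
      · exact absurd M.empty_indep hCdep
      · exact hne
    -- C is not spanning
    have hCns : ¬ M.Spanning C := by
      intro hsp
      obtain ⟨B, hB, hBC⟩ := hsp.exists_isBase_subset
      have hBfin : C.Finite := hCfin
      have : B = C := Set.eq_of_subset_of_ncard_le hBC
        (by rw [← aux_rank_eq hB]; exact hCcard) hCfin
      exact hCdep (this ▸ hB.indep)
    have hCneq : C ≠ M.E := by
      rintro rfl
      exact hCns M.ground_spanning
    -- the two flats
    set F := M.closure C with hF
    set G := M✶.closure (M.E \ C) with hG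
    have hdiffE : M.E \ C ⊆ M✶.E := by rw [Matroid.dual_ground]; exact Set.diff_subset
    have hFE : F ⊆ M.E := M.closure_subset_ground C
    have hGE : G ⊆ M.E := by
      have := M✶.closure_subset_ground (M.E \ C)
      rwa [Matroid.dual_ground] at this
    have hFne : F ≠ M.E := by
      intro hFeq
      exact hCns ((Matroid.spanning_iff_closure_eq hCE).mpr hFeq)
    have hGne : G ≠ M.E := by
      intro hGeq
      have hsp : M✶.Spanning (M.E \ C) := by
        rw [Matroid.spanning_iff_closure_eq hdiffE, Matroid.dual_ground]
        exact hGeq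
      have hco : M✶.Coindep C := by
        rw [Matroid.coindep_iff_compl_spanning (by rwa [Matroid.dual_ground])]
        rwa [Matroid.dual_ground]
      rw [Matroid.dual_coindep_iff] at hco
      exact hCdep hco
    have hCsub : C ⊆ F := M.subset_closure C hCE
    have hdsub : M.E \ C ⊆ G := M✶.subset_closure (M.E \ C) hdiffE
    have hunion : F ∪ G = M.E := by
      apply Set.Subset.antisymm (Set.union_subset hFE hGE)
      intro e he
      by_cases heC : e ∈ C
      · exact Set.mem_union_left _ (hCsub heC)
      · exact Set.mem_union_right _ (hdsub ⟨he, heC⟩)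
    have hGnonempty : G.Nonempty := by
      obtain ⟨e, heE, heC⟩ := Set.exists_of_ssubset (hCE.ssubset_of_ne hCneq)
      exact ⟨e, hdsub ⟨heE, heC⟩⟩
    have hFnonempty : F.Nonempty := hCne.mono hCsub
    exact h F G ⟨aux_closure_flat M C, aux_closure_flat M✶ (M.E \ C), hFnonempty,
      hGnonempty, Or.inl hFne, hunion⟩ ⟨hFne, hGne⟩
  · -- uniform ⇒ no mixed biflats
    intro hU F G hbf
    rintro ⟨hFne, hGne⟩
    obtain ⟨hFflat, hGflat, hFnonempty, hGnonempty, -, hunion⟩ := hbf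
    have hFE : F ⊆ M.E := hFflat.subset_ground
    have hGE : G ⊆ M.E := by
      have := hGflat.subset_ground; rwa [Matroid.dual_ground] at this
    have hrn : r ≤ n := by
      obtain ⟨B, hB⟩ := M.exists_isBase
      rw [hr, aux_rank_eq hB, hn]
      exact Set.ncard_le_ncard hB.subset_ground hEfin
    -- F has fewer than r elements
    have hFcard : F.ncard + 1 ≤ r := by
      by_contra hle
      push_neg at hle
      have hrF : r ≤ F.ncard := by omega
      obtain ⟨S, hSF, hScard⟩ := Set.exists_subset_card_eq hrF
      have hSE : S ⊆ M.E := hSF.trans hFE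
      have hSindep : M.Indep S := (hU S hSE).mpr (le_of_eq hScard)
      have hSbase : M.IsBase S := aux_base_of_indep_card hSindep (le_of_eq hScard.symm)
      have hFsp : M.Spanning F := hSbase.spanning.superset hSF hFE
      exact hFne (hFflat.closure ▸ hFsp.closure_eq)
    -- G has fewer than n - r elements
    have hGcard : G.ncard + 1 + r ≤ n := by
      by_contra hle
      push_neg at hle
      have hrG : n - r ≤ G.ncard := by omega
      obtain ⟨S, hSG, hScard⟩ := Set.exists_subset_card_eq hrG
      have hSE : S ⊆ M.E := hSG.trans hGE
      have hSfin : S.Finite := hEfin.subset hSE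
      have hcompl : (M.E \ S).ncard = r := by
        rw [Set.ncard_diff hSE hSfin, ← hn, hScard]
        omega
      have hcomplE : M.E \ S ⊆ M.E := Set.diff_subset
      have hcomplindep : M.Indep (M.E \ S) := (hU _ hcomplE).mpr (le_of_eq hcompl)
      have hcomplbase : M.IsBase (M.E \ S) := aux_base_of_indep_card hcomplindep
        (le_of_eq hcompl.symm)
      have hSdual : M✶.Indep S := by
        rw [← Matroid.coindep_def, Matroid.coindep_iff_compl_spanning hSE]
        exact hcomplbase.spanning
      -- S is a base of M✶
      obtain ⟨B, hB, hSB⟩ := hSdual.exists_isBase_superset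
      have hBE : B ⊆ M.E := by
        have := hB.subset_ground; rwa [Matroid.dual_ground] at this
      have hBfin : B.Finite := hEfin.subset hBE
      have hBbase : M.IsBase (M.E \ B) := by
        rw [← Matroid.dual_isBase_iff hBE]; exact hB
      have hBcard : B.ncard = n - r := by
        have h1 : (M.E \ B).ncard = n - B.ncard := by
          rw [Set.ncard_diff hBE hBfin, ← hn]
        have h2 : (M.E \ B).ncard = r := by rw [hr, aux_rank_eq hBbase]
        have h3 : B.ncard ≤ n := Set.ncard_le_ncard hBE hEfin
        omega
      have hSBeq : S = B := Set.eq_of_subset_of_ncard_le hSB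
        (by rw [hBcard, hScard]) hBfin
      have hGsp : M✶.Spanning G := by
        subst hSBeq
        exact hB.spanning.superset hSG (by rwa [Matroid.dual_ground])
      have := hGflat.closure ▸ hGsp.closure_eq
      rw [Matroid.dual_ground] at this
      exact hGne this
    have hle : n ≤ F.ncard + G.ncard := by
      rw [hn, ← hunion]
      exact Set.ncard_union_le F G
    omega
end

section
/- Let M be a loopless and coloopless matroid on finite ground set E. Every chain in the poset of biflats of M has length (number of elements) at most |E| − 1, i.e., any bichain F₁|G₁ < ... < F_ℓ|G_ℓ satisfies ℓ ≤ |E| − 1. -/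
open Matroid

variable {α : Type*}

open Set
noncomputable def myRk (M : Matroid α) (X : Set α) : ℕ :=
  (M.exists_isBasis' X).choose.ncard

lemma myRk_eq {M : Matroid α} {I X : Set α} (hI : M.IsBasis' I X) : myRk M X = I.ncard := by
  have h := (M.exists_isBasis' X).choose_spec.encard_eq_encard hI
  rw [myRk, Set.ncard_def, h, ← Set.ncard_def]

lemma myRk_mono (M : Matroid α) [M.Finite] {X Y : Set α} (hXY : X ⊆ Y) :
    myRk M X ≤ myRk M Y := by
  obtain ⟨I, hI⟩ := M.exists_isBasis' X
  obtain ⟨J, hJ, hIJ⟩ := hI.indep.subset_isBasis'_of_subset (hI.subset.trans hXY)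
  rw [myRk_eq hI, myRk_eq hJ]
  exact Set.ncard_le_ncard hIJ (M.set_finite J hJ.indep.subset_ground)

lemma myRk_strict (M : Matroid α) [M.Finite] {F F' : Set α} (hF : M.IsFlat F) (hF' : M.IsFlat F')
    (hss : F ⊂ F') : myRk M F < myRk M F' := by
  obtain ⟨I, hI⟩ := M.exists_isBasis F hF.subset_ground
  obtain ⟨J, hJ, hIJ⟩ := hI.indep.subset_isBasis'_of_subset (hI.subset.trans hss.subset)
  rw [myRk_eq hI.isBasis', myRk_eq hJ]
  refine Set.ncard_lt_ncard (ssubset_of_ne_of_subset ?_ hIJ)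
    (M.set_finite J hJ.indep.subset_ground)
  rintro rfl
  have h1 : F' ⊆ M.closure I := (hJ.isBasis hF'.subset_ground).subset_closure
  have h2 : M.closure I ⊆ F := by
    rw [← hF.closure]
    exact M.closure_subset_closure hI.subset
  exact hss.not_subset (h1.trans h2)

lemma myRk_pos {M : Matroid α} [M.Finite] {F : Set α} (hl : ∀ a ∈ M.E, M.Indep {a})
    (hne : F.Nonempty) (hF : F ⊆ M.E) : 1 ≤ myRk M F := by
  obtain ⟨a, ha⟩ := hne
  obtain ⟨J, hJ, hIJ⟩ := (hl a (hF ha)).subset_isBasis'_of_subset (singleton_subset_iff.2 ha)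
  rw [myRk_eq hJ]
  exact (Set.ncard_pos (M.set_finite J hJ.indep.subset_ground)).2 ⟨a, hIJ rfl⟩

lemma myRk_add_dual (M : Matroid α) [M.Finite] :
    myRk M M.E + myRk M✶ M.E = M.E.ncard := by
  obtain ⟨B, hB⟩ := M.exists_isBase
  have h1 : myRk M M.E = B.ncard := myRk_eq hB.isBasis_ground.isBasis'
  have h2 : myRk M✶ M.E = (M.E \ B).ncard := by
    have := hB.compl_isBase_dual.isBasis_ground.isBasis'
    rw [dual_ground] at this
    exact myRk_eq this
  rw [h1, h2, add_comm]
  exact Set.ncard_diff_add_ncard_of_subset hB.subset_ground M.ground_finite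


/-- every strict chain of biflats of a loopless, coloopless matroid on a
finite ground set `E` has at most `|E| - 1` elements. -/
theorem bichain_length_le (M : Matroid α) [M.Finite]
    (hl : MatroidLoopless M) (hcl : MatroidColoopless M)
    (ℓ : ℕ) (f : Fin ℓ → Set α × Set α)
    (hb : ∀ i, IsBiflat M (f i).1 (f i).2)
    (hchain : ∀ i j : Fin ℓ, i < j → BiflatLE (f i) (f j) ∧ f i ≠ f j) :
    ℓ ≤ M.E.ncard - 1 := by
  set n := M.E.ncard with hn
  set rE := myRk M✶ M.E with hrE
  set g : Fin ℓ → ℕ := fun i => myRk M (f i).1 + (rE - myRk M✶ (f i).2) with hg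
  have hGsub : ∀ i, (f i).2 ⊆ M.E := fun i => (hb i).2.1.subset_ground
  have hG_le : ∀ i, myRk M✶ (f i).2 ≤ rE := fun i => myRk_mono M✶ (hGsub i)
  have hG_pos : ∀ i, 1 ≤ myRk M✶ (f i).2 := fun i =>
    myRk_pos (fun a ha => hcl a ha) (hb i).2.2.2.1 (hGsub i)
  have hF_pos : ∀ i, 1 ≤ myRk M (f i).1 := fun i =>
    myRk_pos hl (hb i).2.2.1 (hb i).1.subset_ground
  have hF_le : ∀ i, myRk M (f i).1 ≤ myRk M M.E := fun i =>
    myRk_mono M (hb i).1.subset_ground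
  have hsum := myRk_add_dual M
  have hlo : ∀ i, 1 ≤ g i := fun i => le_trans (hF_pos i) (Nat.le_add_right _ _)
  have hhi : ∀ i, g i ≤ n - 1 := by
    intro i
    have h1 := hF_le i
    have h2 := hG_pos i
    have h3 := hG_le i
    simp only [hg]
    omega
  have hmono : StrictMono g := by
    intro i j hij
    obtain ⟨⟨hFij, hGji⟩, hne⟩ := hchain i j hij
    by_cases hF : (f i).1 = (f j).1
    · have hGne : (f j).2 ≠ (f i).2 := by
        intro h
        exact hne (Prod.ext hF h.symm)
      have := myRk_strict M✶ (hb j).2.1 (hb i).2.1 (ssubset_of_ne_of_subset hGne hGji)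
      have h3 := hG_le i
      simp only [hg, hF]
      omega
    · have := myRk_strict M (hb i).1 (hb j).1 (ssubset_of_ne_of_subset hF hFij)
      have h2 := myRk_mono M✶ hGji
      simp only [hg]
      omega
  have hinj : Set.InjOn g ↑(Finset.univ : Finset (Fin ℓ)) := hmono.injective.injOn
  have hmaps : ∀ i ∈ (Finset.univ : Finset (Fin ℓ)), g i ∈ Finset.Icc 1 (n - 1) :=
    fun i _ => Finset.mem_Icc.2 ⟨hlo i, hhi i⟩
  have := Finset.card_le_card_of_injOn g hmaps hinj
  simpa [Nat.card_Icc] using this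
end
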